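/- arXiv:2010.16226 — 7 statements merged into one kernel-verified Lean document; each statement's English description precedes it below -/
import Mathlib

section
/- Let M be a matrix with n rows, m columns, and entries in {0,...,k-1}, and let X be a set with at least two elements. Then M is dysfunctional in X (i.e., there exist two interpretations of M of type X — functions f,g : {0,...,k-1} → X — and row indices i,i' such that the i-th row under f equals the i'-th row under g entrywise, but f(0) ≠ g(0)) if and only if M is dysfunctional in the two-element set {0,1}. -/
/-- `M` is functional in `X`: whenever two rows of `M` (possibly from different
interpretations `f`, `g`) agree entrywise after interpretation, the extended
entries `f 0` and `g 0` agree. -/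
def Functional {n m k : ℕ} (hk : 0 < k) (M : Fin n → Fin m → Fin k) (X : Type) : Prop :=
  ∀ (f g : Fin k → X) (i i' : Fin n),
    (∀ j : Fin m, f (M i j) = g (M i' j)) → f ⟨0, hk⟩ = g ⟨0, hk⟩

theorem stmt0 {n m k : ℕ} (hk : 0 < k) (M : Fin n → Fin m → Fin k)
    (X : Type) (hX : ∃ x y : X, x ≠ y) :
    ¬ Functional hk M X ↔ ¬ Functional hk M (Fin 2) := by
  obtain ⟨x, y, hxy⟩ := hX
  constructor
  · intro h hfun2
    apply h
    intro f g i i' hrow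
    classical
    by_contra hne
    -- build Fin 2 interpretations
    set F : Fin k → Fin 2 := fun a => if f a = f ⟨0, hk⟩ then 0 else 1 with hF
    set G : Fin k → Fin 2 := fun a => if g a = f ⟨0, hk⟩ then 0 else 1 with hG
    have hFG : F ⟨0, hk⟩ = G ⟨0, hk⟩ := by
      apply hfun2 F G i i'
      intro j
      simp only [hF, hG, hrow j]
    simp only [hF, hG, if_pos rfl] at hFG
    rw [if_neg (fun hc => hne hc.symm)] at hFG
    exact absurd hFG (by decide)
  · intro h hfunX
    apply h
    intro f g i i' hrow
    classical
    set e : Fin 2 → X := fun a => if a = 0 then x else y with he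
    have hinj : Function.Injective e := by
      intro a b hab
      fin_cases a <;> fin_cases b <;> simp only [he] at hab <;> norm_num at hab <;>
        first | rfl | exact absurd hab hxy | exact absurd hab.symm hxy
    apply hinj
    apply hfunX (e ∘ f) (e ∘ g) i i'
    intro j
    simp [hrow j]
end

section
/- Let M be a matrix with n rows, m ≥ 1 columns, entries in {0,...,k-1}. Suppose every row of M contains an entry 0, and for every pair of distinct rows i, i' there exist columns j, j' with M(i,j) = 0 and M(i',j') = 0 such that j and j' lie in the same linkage class for rows i and i'. Then M is functional in every set X. -/
/-- The linkage equivalence on columns, for rows `i`, `i'` of `M`. -/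
def Linkage {n m k : ℕ} (M : Fin n → Fin m → Fin k) (i i' : Fin n) :
    Fin m → Fin m → Prop :=
  Relation.EqvGen (fun j j' => M i j = M i j' ∨ M i' j = M i' j')

theorem stmt3 {n m k : ℕ} (hk : 0 < k) (hm : 0 < m) (M : Fin n → Fin m → Fin k)
    (hzero : ∀ i : Fin n, ∃ j : Fin m, M i j = ⟨0, hk⟩)
    (hlink : ∀ i i' : Fin n, i ≠ i' →
      ∃ j j' : Fin m, M i j = ⟨0, hk⟩ ∧ M i' j' = ⟨0, hk⟩ ∧ Linkage M i i' j j') :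
    ∀ X : Type, Functional hk M X := by
  intro X f g i i' hfg
  by_cases hii : i = i'
  · subst hii
    obtain ⟨j, hj⟩ := hzero i
    have := hfg j
    rw [hj] at this
    exact this
  · obtain ⟨j, j', hj, hj', hlk⟩ := hlink i i' hii
    have key : ∀ a b : Fin m, Linkage M i i' a b → f (M i a) = f (M i b) := by
      intro a b h
      induction h with
      | rel a b hab =>
        rcases hab with h | h
        · rw [h]
        · have := (hfg a).trans (congrArg g h) |>.trans (hfg b).symm
          exact this
      | refl => rfl
      | symm _ _ _ ih => exact ih.symm
      | trans _ _ _ _ _ ih1 ih2 => exact ih1.trans ih2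
    calc f ⟨0, hk⟩ = f (M i j) := by rw [hj]
      _ = f (M i j') := key j j' hlk
      _ = g (M i' j') := hfg j'
      _ = g ⟨0, hk⟩ := by rw [hj']
end

section
/- Let M be a matrix with n rows and m ≥ 1 columns over {0,...,k-1}. Suppose M contains two zero entries in two distinct rows i, i' (say M(i,j₀) = 0 = M(i',j₀')) such that j₀ and j₀' are not in the same linkage class for rows i, i'. Then M is dysfunctional in any set with at least two elements. -/
theorem stmt4 {n m k : ℕ} (hk : 0 < k) (hm : 0 < m) (M : Fin n → Fin m → Fin k)
    (i i' : Fin n) (hii : i ≠ i') (j₀ j₀' : Fin m)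
    (h0 : M i j₀ = ⟨0, hk⟩) (h0' : M i' j₀' = ⟨0, hk⟩)
    (hnl : ¬ Linkage M i i' j₀ j₀') :
    ∀ X : Type, (∃ x y : X, x ≠ y) → ¬ Functional hk M X := by
  rintro X ⟨x, y, hxy⟩ hF
  classical
  set L : Fin m → Prop := fun j => Linkage M i i' j j₀ with hL
  let f : Fin k → X := fun c => if ∃ j, L j ∧ M i j = c then x else y
  let g : Fin k → X := fun c => if ∃ j, L j ∧ M i' j = c then x else y
  have key : ∀ j : Fin m, f (M i j) = g (M i' j) := by
    intro j
    by_cases hj : L j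
    · have hf : f (M i j) = x := if_pos ⟨j, hj, rfl⟩
      have hg : g (M i' j) = x := if_pos ⟨j, hj, rfl⟩
      rw [hf, hg]
    · have hf : f (M i j) = y := by
        apply if_neg
        rintro ⟨j₁, hj₁, he⟩
        exact hj (Relation.EqvGen.trans _ _ _
          (Relation.EqvGen.rel _ _ (Or.inl he.symm)) hj₁)
      have hg : g (M i' j) = y := by
        apply if_neg
        rintro ⟨j₁, hj₁, he⟩
        exact hj (Relation.EqvGen.trans _ _ _
          (Relation.EqvGen.rel _ _ (Or.inr he.symm)) hj₁)
      rw [hf, hg]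
  have := hF f g i i' key
  have hfx : f ⟨0, hk⟩ = x := by
    rw [← h0]; exact if_pos ⟨j₀, Relation.EqvGen.refl _, rfl⟩
  have hgy : g ⟨0, hk⟩ = y := by
    rw [← h0']
    apply if_neg
    rintro ⟨j₁, hj₁, he⟩
    exact hnl (Relation.EqvGen.symm _ _
      (Relation.EqvGen.trans _ _ _ (Relation.EqvGen.rel _ _ (Or.inr he.symm)) hj₁))
  exact hxy (hfx ▸ hgy ▸ this)
end

section
/- Let M be a nonempty matrix over {0,...,k-1} with n rows. Then M is functional in every set if and only if M is functional in the set {0,1}. -/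
theorem Functional.of_nontrivial {n m k : ℕ} {hk : 0 < k} {M : Fin n → Fin m → Fin k}
    {Y : Type} [Nontrivial Y] (h : Functional hk M Y) (X : Type) : Functional hk M X := by
  classical
  intro f g i i' hfg
  obtain ⟨a, b, hab⟩ := exists_pair_ne Y
  -- Collapse `X` onto `Y` by testing equality with the value `f 0`.
  let χ : X → Y := fun x => if x = f ⟨0, hk⟩ then a else b
  have hχ : χ (f ⟨0, hk⟩) = χ (g ⟨0, hk⟩) :=
    h (χ ∘ f) (χ ∘ g) i i' fun j => congrArg χ (hfg j)
  by_contra hne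
  simp only [χ, if_pos rfl, if_neg (Ne.symm hne)] at hχ
  exact hab hχ

theorem stmt5_general {n m k : ℕ} (hk : 0 < k) (M : Fin n → Fin m → Fin k) :
    (∀ X : Type, Functional hk M X) ↔ Functional hk M (Fin 2) :=
  ⟨fun h => h (Fin 2), Functional.of_nontrivial⟩

theorem stmt5 {n m k : ℕ} (hk : 0 < k) (hm : 0 < m) (M : Fin n → Fin m → Fin k) :
    (∀ X : Type, Functional hk M X) ↔ Functional hk M (Fin 2) :=
  stmt5_general hk M
end

section
/- For every n ≥ 1, the n×n matrix Dₙ over {0,1} with entries 1 on the main diagonal and 0 elsewhere is functional in every set when n ≥ 3, and is dysfunctional in any set with at least two elements when n ∈ {1,2}. -/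
/-- Dₙ : the n×n matrix over {0,1} with 1's on the main diagonal and 0's elsewhere. -/
def D (n : ℕ) : Fin n → Fin n → Fin 2 := fun i j => if i = j then 1 else 0

theorem stmt8 : ∀ n : ℕ, 1 ≤ n →
    ((3 ≤ n → ∀ X : Type, Functional (by norm_num) (D n) X) ∧
      ((n = 1 ∨ n = 2) →
        ∀ X : Type, (∃ x y : X, x ≠ y) → ¬ Functional (by norm_num) (D n) X)) := by
  intro n hn
  constructor
  · intro h3 X f g i i' hfg
    obtain ⟨j, hji, hji'⟩ : ∃ j : Fin n, j ≠ i ∧ j ≠ i' := by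
      by_contra hc
      push_neg at hc
      have hsub : (Finset.univ : Finset (Fin n)) ⊆ {i, i'} := by
        intro j _
        simp only [Finset.mem_insert, Finset.mem_singleton]
        by_cases h : j = i
        · exact Or.inl h
        · exact Or.inr (hc j h)
      have := Finset.card_le_card hsub
      have hc2 : ({i, i'} : Finset (Fin n)).card ≤ 2 :=
        (Finset.card_insert_le _ _).trans (by simp)
      simp [Finset.card_univ] at this
      omega
    have h := hfg j
    simp only [D, if_neg (Ne.symm hji), if_neg (Ne.symm hji')] at h
    exact h
  · rintro h12 X ⟨x, y, hxy⟩ hF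
    rcases h12 with rfl | rfl
    · have := hF (fun _ => x) (fun t => if t = 1 then x else y) 0 0
        (by intro j; fin_cases j; simp [D])
      simp at this
      exact hxy this
    · have := hF (fun t => if t = 0 then x else y) (fun t => if t = 0 then y else x) 0 1
        (by intro j; fin_cases j <;> simp [D])
      simp at this
      exact hxy this
end

section
/- Let R ⊆ Xⁿ be an n-ary relation, M a matrix, and N ∈ matr(n,m,k) a matrix with n rows. Suppose [0]ₙ (the all-zeros column) belongs to colᴹ(N), the least n-ary relation on {0,...,k-1} containing the columns of N and M-sharp. If R is M-sharp, then R is N-closed: for every function f : {0,...,k-1} → X, if all columns of N interpreted via f lie in R, then the tuple (f(0),...,f(0)) lies in R. -/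
/-- A matrix of integers: `n` rows, `m` columns, entries in `{0,...,k-1}` with `k > 0`. -/
structure Matr where
  n : ℕ
  m : ℕ
  k : ℕ
  kpos : 0 < k
  entry : Fin n → Fin m → Fin k

/-- An n-ary relation `R ⊆ Xⁿ` is `A`-sharp. -/
def MSharp (A : Matr) {X : Type} {n : ℕ} (R : Set (Fin n → X)) : Prop :=
  ∀ (ρ : Fin n → Fin A.n) (f : Fin n → Fin A.k → X),
    (∀ j : Fin A.m, (fun i => f i (A.entry (ρ i) j)) ∈ R) →
      (fun i => f i ⟨0, A.kpos⟩) ∈ R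

/-- The set of columns of a matrix `N`. -/
def colSet {n m k : ℕ} (N : Fin n → Fin m → Fin k) : Set (Fin n → Fin k) :=
  {v | ∃ j : Fin m, v = fun i => N i j}

theorem stmt14 (A : Matr) {n m k : ℕ} (hk : 0 < k) (N : Fin n → Fin m → Fin k)
    (h0 : (fun _ : Fin n => (⟨0, hk⟩ : Fin k)) ∈
      ⋂₀ {T : Set (Fin n → Fin k) | colSet N ⊆ T ∧ MSharp A T})
    {X : Type} (R : Set (Fin n → X)) (hR : MSharp A R) :
    ∀ f : Fin k → X, (∀ j : Fin m, (fun i => f (N i j)) ∈ R) →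
      (fun _ : Fin n => f ⟨0, hk⟩) ∈ R := by
  intro f hf
  have := h0 {v : Fin n → Fin k | (fun i => f (v i)) ∈ R} ?_
  · exact this
  constructor
  · rintro v ⟨j, rfl⟩
    exact hf j
  · intro ρ g hg
    exact hR ρ (fun i a => f (g i a)) hg
end

section
/- Let M be the Mal'tsev matrix [[0,1,1],[1,1,0]] and, for l' ≥ 1, let M_{l'} be the 2×(2l'+1) matrix with first row (0,1,1,2,2,...,l',l') and second row (1,1,2,2,...,l',l',0), entries in {0,...,l'}. If a binary relation R ⊆ X² is M-sharp (equivalently, difunctional: x₀Ry₁ ∧ x₁Ry₁ ∧ x₁Ry₀ ⟹ x₀Ry₀), then R is M_{l'}-closed for every l' ≥ 1. -/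
/-- First row of M_{l'}: (0,1,1,2,2,...,l',l'). -/
def row1 (l' : ℕ) (j : Fin (2 * l' + 1)) : Fin (l' + 1) :=
  ⟨(j.val + 1) / 2, by have := j.isLt; omega⟩

/-- Second row of M_{l'}: (1,1,2,2,...,l',l',0). -/
def row2 (l' : ℕ) (j : Fin (2 * l' + 1)) : Fin (l' + 1) :=
  ⟨if j.val = 2 * l' then 0 else j.val / 2 + 1, by have := j.isLt; split <;> omega⟩

/-- `R` is difunctional: (a,d), (c,d), (c,b) ∈ R implies (a,b) ∈ R. -/
def Difunctional {X : Type} (R : Set (X × X)) : Prop :=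
  ∀ a b c d : X, (a, d) ∈ R → (c, d) ∈ R → (c, b) ∈ R → (a, b) ∈ R

theorem stmt17 {X : Type} (R : Set (X × X)) (hR : Difunctional R) :
    ∀ l' : ℕ, 1 ≤ l' → ∀ f : Fin (l' + 1) → X,
      (∀ j : Fin (2 * l' + 1), (f (row1 l' j), f (row2 l' j)) ∈ R) →
      (f 0, f 0) ∈ R := by
  intro l' hl f hcols
  -- diagonal pairs (f k, f k) for 1 ≤ k ≤ l', from odd columns 2k-1
  have diag : ∀ k : ℕ, (hk1 : 1 ≤ k) → (hk2 : k ≤ l') →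
      (f ⟨k, by omega⟩, f ⟨k, by omega⟩) ∈ R := by
    intro k hk1 hk2
    have h := hcols ⟨2 * k - 1, by omega⟩
    have e1 : row1 l' ⟨2 * k - 1, by omega⟩ = ⟨k, by omega⟩ := by
      apply Fin.ext; simp only [row1]; omega
    have e2 : row2 l' ⟨2 * k - 1, by omega⟩ = ⟨k, by omega⟩ := by
      apply Fin.ext; simp only [row2]
      rw [if_neg (by omega)]; omega
    rwa [e1, e2] at h
  -- step pairs (f k, f (k+1)) for k < l', from even columns 2k
  have step : ∀ k : ℕ, (hk : k < l') →
      (f ⟨k, by omega⟩, f ⟨k + 1, by omega⟩) ∈ R := by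
    intro k hk
    have h := hcols ⟨2 * k, by omega⟩
    have e1 : row1 l' ⟨2 * k, by omega⟩ = ⟨k, by omega⟩ := by
      apply Fin.ext; simp only [row1]; omega
    have e2 : row2 l' ⟨2 * k, by omega⟩ = ⟨k + 1, by omega⟩ := by
      apply Fin.ext; simp only [row2]
      rw [if_neg (by omega)]; omega
    rwa [e1, e2] at h
  -- last pair (f l', f 0), from column 2l'
  have last : (f ⟨l', by omega⟩, f ⟨0, by omega⟩) ∈ R := by
    have h := hcols ⟨2 * l', by omega⟩
    have e1 : row1 l' ⟨2 * l', by omega⟩ = ⟨l', by omega⟩ := by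
      apply Fin.ext; simp only [row1]; omega
    have e2 : row2 l' ⟨2 * l', by omega⟩ = ⟨0, by omega⟩ := by
      apply Fin.ext; simp only [row2]; simp
    rwa [e1, e2] at h
  -- (f 0, f k) ∈ R for all 1 ≤ k ≤ l'
  have chain : ∀ k : ℕ, (hk1 : 1 ≤ k) → (hk2 : k ≤ l') →
      ((f ⟨0, by omega⟩, f ⟨k, by omega⟩) ∈ R) := by
    intro k
    induction k with
    | zero => omega
    | succ n ih =>
      intro _ hk2
      rcases Nat.eq_zero_or_pos n with hn | hn
      · subst hn
        have := step 0 (by omega)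
        simpa using this
      · exact hR _ _ _ _ (ih hn (by omega)) (diag n hn (by omega))
          (step n (by omega))
  have h0 : (f ⟨0, by omega⟩, f ⟨0, by omega⟩) ∈ R :=
    hR _ _ _ _ (chain l' hl le_rfl) (diag l' hl le_rfl) last
  have : (0 : Fin (l' + 1)) = ⟨0, by omega⟩ := rfl
  rwa [this]
end
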